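/- arXiv:1109.5686 — 2 statements merged into one kernel-verified Lean document; each statement's English description precedes it below -/
import Mathlib

section
/- Let A be a complex symmetric n×n matrix (A = Aᵀ) that is diagonalizable over ℂ. Then A admits a basis of eigenvectors X₁,…,Xₙ that is orthonormal with respect to the complex bilinear form ⟨v,w⟩ = Σₖ vₖwₖ, i.e. ⟨Xᵢ,Xⱼ⟩ = 0 for i ≠ j and ⟨Xᵢ,Xᵢ⟩ = 1 for all i. -/
/-! A symmetric matrix is self-adjoint for the bilinear form `v ⬝ᵥ w`, so eigenvectors for
distinct eigenvalues are orthogonal. Diagonalizability makes `ℂⁿ` the direct sum of the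
eigenspaces, and an orthogonal basis of each eigenspace for the restricted (still symmetric)
form then yields an orthogonal eigenbasis of `ℂⁿ`. Since the form is nondegenerate on `ℂⁿ`, no
vector of an orthogonal basis is isotropic, so each can be divided by a square root of
`v ⬝ᵥ v`. -/

open Matrix Module Module.End

namespace Module.End

variable {R M ι : Type*} [CommRing R] [AddCommGroup M] [Module R M]

theorem iSup_eigenspace_eq_top_of_basis {f : End R M} (b : Basis ι R M)
    (hb : ∀ i, ∃ μ : R, f (b i) = μ • b i) : ⨆ μ, f.eigenspace μ = ⊤ := by
  rw [eq_top_iff, ← b.span_eq, Submodule.span_le]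
  rintro - ⟨i, rfl⟩
  obtain ⟨μ, hμ⟩ := hb i
  exact Submodule.mem_iSup_of_mem μ (mem_eigenspace_iff.mpr hμ)

end Module.End

namespace LinearMap.BilinForm

variable {K V : Type*} [Field K] [AddCommGroup V] [Module K V] {B : LinearMap.BilinForm K V}
  {f : End K V}

theorem apply_eq_zero_of_mem_eigenspace_of_ne (hf : IsAdjointPair B B f f) {μ ν : K}
    (hμν : μ ≠ ν) {x y : V} (hx : x ∈ f.eigenspace μ) (hy : y ∈ f.eigenspace ν) :
    B x y = 0 := by
  rw [mem_eigenspace_iff] at hx hy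
  have h : (μ - ν) * B x y = 0 := by
    linear_combination (by simpa [hx, hy] using hf x y : μ * B x y = ν * B x y)
  exact (mul_eq_zero.mp h).resolve_left (sub_ne_zero.mpr hμν)

theorem _root_.LinearMap.IsOrthoᵢ.unitsSMul {ι : Type*} {b : Basis ι K V} (hb : B.IsOrthoᵢ b)
    (w : ι → Kˣ) :
    B.IsOrthoᵢ (b.unitsSMul w) := fun i j hij => by
  simp only [Function.onFun, Basis.unitsSMul_apply, Units.smul_def, map_smul,
    LinearMap.smul_apply, isOrthoᵢ_def.mp hb i j hij, smul_zero]

variable [FiniteDimensional K V]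

theorem exists_isOrthoᵢ_eigenbasis [Invertible (2 : K)] (hB : B.IsSymm)
    (hf : IsAdjointPair B B f f) (htop : ⨆ μ, f.eigenspace μ = ⊤) :
    ∃ b : Basis (Fin (finrank K V)) K V, B.IsOrthoᵢ b ∧ ∀ i, ∃ μ : K, f (b i) = μ • b i := by
  classical
  have hint := DirectSum.isInternal_submodule_of_iSupIndep_of_iSup_eq_top
    f.eigenspaces_iSupIndep htop
  choose w hw using fun μ => exists_orthogonal_basis
    (B := B.domRestrict₁₂ (f.eigenspace μ) (f.eigenspace μ)) ⟨fun x y => hB.eq x y⟩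
  let b := hint.collectedBasis w
  have hmem := hint.collectedBasis_mem w
  have hb : B.IsOrthoᵢ b := by
    rintro ⟨μ, i⟩ ⟨ν, j⟩ hij
    change B (b ⟨μ, i⟩) (b ⟨ν, j⟩) = 0
    rcases eq_or_ne μ ν with rfl | hμν
    · rw [hint.collectedBasis_coe]
      exact hw μ fun h : i = j => hij (h ▸ rfl)
    · exact apply_eq_zero_of_mem_eigenspace_of_ne hf hμν (hmem ⟨μ, i⟩) (hmem ⟨ν, j⟩)
  have : Fintype _ := FiniteDimensional.fintypeBasisIndex b
  let e := b.indexEquiv (finBasis K V)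
  refine ⟨b.reindex e, ?_, fun i => ?_⟩
  · rw [b.coe_reindex]
    exact fun i j hij => hb (e.symm.injective.ne hij)
  · rw [b.reindex_apply]
    exact ⟨_, mem_eigenspace_iff.mp (hmem _)⟩

theorem exists_orthonormal_eigenbasis [IsAlgClosed K] [Invertible (2 : K)] (hB : B.IsSymm)
    (hB' : B.SeparatingLeft) (hf : IsAdjointPair B B f f) (htop : ⨆ μ, f.eigenspace μ = ⊤) :
    ∃ b : Basis (Fin (finrank K V)) K V,
      B.IsOrthoᵢ b ∧ (∀ i, B (b i) (b i) = 1) ∧ ∀ i, ∃ μ : K, f (b i) = μ • b i := by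
  obtain ⟨b, hb, heig⟩ := exists_isOrthoᵢ_eigenbasis hB hf htop
  have hself := hb.not_isOrtho_basis_self_of_separatingLeft hB'
  choose c hc using fun i => IsAlgClosed.exists_pow_nat_eq (B (b i) (b i)) two_pos
  have hc0 : ∀ i, c i ≠ 0 := fun i h => hself i (by rw [← hc i, h]; ring)
  refine ⟨b.unitsSMul fun i => Units.mk0 (c i)⁻¹ (inv_ne_zero (hc0 i)), hb.unitsSMul _,
    fun i => ?_, fun i => ?_⟩
  · simp [Basis.unitsSMul_apply, ← hc i]
    field_simp [hc0 i]
  · obtain ⟨μ, hμ⟩ := heig i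
    exact ⟨μ, by simp [Basis.unitsSMul_apply, Units.smul_def, hμ, smul_comm μ]⟩

end LinearMap.BilinForm

namespace Matrix

variable {R n : Type*} [CommRing R] [Fintype n]

theorem IsSymm.isAdjointPair_mulVecLin {A : Matrix n n R} (hA : A.IsSymm) :
    LinearMap.IsAdjointPair (dotProductBilin R R) (dotProductBilin R R) A.mulVecLin
      A.mulVecLin := fun v w => by
  simp only [dotProductBilin_apply_apply, mulVecLin_apply]
  rw [dotProduct_mulVec, ← vecMul_transpose, hA.eq]

variable [DecidableEq n]

theorem IsDiag.mulVec_single_one {D : Matrix n n R} (hD : D.IsDiag) (j : n) :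
    D *ᵥ Pi.single j 1 = D j j • Pi.single j 1 := by
  conv_lhs => rw [← (isDiag_iff_diagonal_diag D).mp hD]
  rw [diagonal_mulVec_single, ← smul_eq_mul, Pi.single_smul, diag_apply]

theorem iSup_eigenspace_mulVecLin_eq_top {P D : Matrix n n R} (hP : IsUnit P.det)
    (hD : D.IsDiag) : ⨆ μ, eigenspace (P * D * P⁻¹).mulVecLin μ = ⊤ := by
  let hPinv := P.invertibleOfIsUnitDet hP
  refine iSup_eigenspace_eq_top_of_basis ((Pi.basisFun R n).map (P.toLinearEquiv' hPinv))
    fun j => ⟨D j j, ?_⟩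
  rw [Basis.map_apply, Pi.basisFun_apply]
  change (P * D * P⁻¹) *ᵥ (P *ᵥ Pi.single j 1) = D j j • (P *ᵥ Pi.single j 1)
  rw [mulVec_mulVec, nonsing_inv_mul_cancel_right _ _ hP, ← mulVec_mulVec,
    hD.mulVec_single_one, mulVec_smul]

end Matrix

/-- A complex symmetric diagonalizable matrix admits a basis of
eigenvectors orthonormal for the complex bilinear form `⟨v,w⟩ = Σₖ vₖ wₖ`. -/
theorem stmt0 (n : ℕ) (A : Matrix (Fin n) (Fin n) ℂ) (hsymm : A.IsSymm)
    (hdiag : ∃ (P D : Matrix (Fin n) (Fin n) ℂ),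
      IsUnit P.det ∧ D.IsDiag ∧ A = P * D * P⁻¹) :
    ∃ X : Fin n → (Fin n → ℂ),
      LinearIndependent ℂ X ∧
      (∀ i, ∃ μ : ℂ, A.mulVec (X i) = μ • X i) ∧
      (∀ i j, i ≠ j → X i ⬝ᵥ X j = 0) ∧
      (∀ i, X i ⬝ᵥ X i = 1) := by
  obtain ⟨P, D, hP, hD, rfl⟩ := hdiag
  obtain ⟨b, hortho, hnorm, heig⟩ := LinearMap.BilinForm.exists_orthonormal_eigenbasis
    (B := dotProductBilin ℂ ℂ) ⟨dotProduct_comm⟩ (fun v => dotProduct_eq_zero v)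
    hsymm.isAdjointPair_mulVecLin (iSup_eigenspace_mulVecLin_eq_top hP hD)
  let e := finCongr (finrank_fin_fun ℂ (n := n))
  refine ⟨b.reindex e, (b.reindex e).linearIndependent, fun i => ?_, fun i j hij => ?_,
    fun i => ?_⟩
  · rw [b.reindex_apply]
    exact heig _
  · rw [b.reindex_apply, b.reindex_apply]
    exact hortho (e.symm.injective.ne hij)
  · rw [b.reindex_apply]
    exact hnorm _
end

section
/- For integers j, k ≥ 1 with j − k ∉ {−2, 0, 2}, ∫_{−1}^{1} Pⱼ(t) Pₖ(t) (t²−1)² dt = 0, where Pₙ(t) = (1/(t²−1)) dⁿ⁻¹/dtⁿ⁻¹ (t²−1)ⁿ. -/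
open Polynomial

private lemma dvd_iter (n i : ℕ) (h : i ≤ n) :
    ((X:ℝ[X])^2 - 1)^(n - i) ∣ derivative^[i] ((X^2 - 1)^n) := by
  induction i with
  | zero => simp
  | succ i ih =>
    obtain ⟨c, hc⟩ := ih (le_of_lt (Nat.lt_of_succ_le h))
    have hni : n - i = (n - (i+1)) + 1 := by omega
    rw [Function.iterate_succ_apply', hc, hni, derivative_mul, derivative_pow]
    refine dvd_add ?_ ?_
    · simp only [Nat.add_sub_cancel]
      exact (((dvd_refl _).mul_left _).mul_right _).mul_right _
    · exact (pow_dvd_pow _ (Nat.le_succ _)).mul_right _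

private lemma eval_iter_zero (n i : ℕ) (h : i < n) (x : ℝ) (hx : x^2 - 1 = 0) :
    (derivative^[i] (((X:ℝ[X])^2 - 1)^n)).eval x = 0 := by
  obtain ⟨c, hc⟩ := dvd_iter n i h.le
  have hn : n - i ≠ 0 := by omega
  rw [hc]
  simp [hx, zero_pow hn]

private lemma parts (P Q : ℝ[X]) (hP1 : P.eval 1 = 0) (hPm1 : P.eval (-1) = 0) :
    ∫ t in (-1:ℝ)..1, (derivative P).eval t * Q.eval t
      = - ∫ t in (-1:ℝ)..1, P.eval t * (derivative Q).eval t := by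
  have hc : ∀ R S : ℝ[X], Continuous fun t : ℝ => R.eval t * S.eval t := by
    intro R S
    exact (R.continuous_aeval.mul S.continuous_aeval)
  have h : ∀ x ∈ Set.uIcc (-1:ℝ) 1, HasDerivAt (fun t => P.eval t * Q.eval t)
      ((derivative P).eval x * Q.eval x + P.eval x * (derivative Q).eval x) x :=
    fun x _ => (P.hasDerivAt x).mul (Q.hasDerivAt x)
  have key := intervalIntegral.integral_eq_sub_of_hasDerivAt h
    (((hc P.derivative Q).add (hc P Q.derivative)).intervalIntegrable _ _)
  rw [intervalIntegral.integral_add ((hc P.derivative Q).intervalIntegrable _ _)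
      ((hc P Q.derivative).intervalIntegrable _ _), hP1, hPm1] at key
  linarith [key]

private lemma key_zero (j : ℕ) (Q : ℝ[X]) :
    ∀ a b : ℕ, a ≤ j - 1 → Q.natDegree < a + b →
    ∫ t in (-1:ℝ)..1, (derivative^[a] (((X:ℝ[X])^2 - 1)^j)).eval t
        * (derivative^[b] Q).eval t = 0 := by
  intro a
  induction a with
  | zero =>
    intro b _ hb
    have hz : derivative^[b] Q = 0 := Polynomial.iterate_derivative_eq_zero (x := b) (by omega)
    rw [hz]
    simp
  | succ a ih =>
    intro b ha hb
    have ha' : a < j := by omega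
    rw [Function.iterate_succ_apply']
    rw [parts _ _ (eval_iter_zero j a ha' 1 (by ring)) (eval_iter_zero j a ha' (-1) (by ring))]
    rw [show (derivative ((derivative^[b]) Q)) = derivative^[b+1] Q from
      (Function.iterate_succ_apply' derivative b Q).symm]
    rw [ih (b+1) (by omega) (by omega)]
    simp

private lemma comp_neg (n i : ℕ) :
    (derivative^[i] (((X:ℝ[X])^2 - 1)^n)).comp (-X)
      = ((-1:ℝ)^i) • derivative^[i] (((X:ℝ[X])^2 - 1)^n) := by
  induction i with
  | zero => simp [pow_comp, sub_comp, X_comp, one_comp, neg_pow]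
  | succ i ih =>
    set A := derivative^[i] (((X:ℝ[X])^2 - 1)^n) with hA
    rw [Function.iterate_succ_apply', ← hA]
    have h1 : derivative (A.comp (-X)) = -(derivative A).comp (-X) := by
      rw [derivative_comp]; simp
    have h2 : derivative (A.comp (-X)) = ((-1:ℝ)^i) • derivative A := by
      rw [ih]; simp
    calc (derivative A).comp (-X) = -(-(derivative A).comp (-X)) := (neg_neg _).symm
      _ = -derivative (A.comp (-X)) := by rw [h1]
      _ = -(((-1:ℝ)^i) • derivative A) := by rw [h2]
      _ = ((-1:ℝ)^(i+1)) • derivative A := by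
          simp [pow_succ, mul_smul, smul_neg]

private lemma odd_int (f : ℝ → ℝ) (hf : ∀ t, f (-t) = -f t) :
    ∫ t in (-1:ℝ)..1, f t = 0 := by
  have h := intervalIntegral.integral_comp_neg (a := (-1:ℝ)) (b := 1) (f := f)
  simp only [hf, neg_neg, intervalIntegral.integral_neg] at h
  linarith [h]

private lemma natdeg_pow (n : ℕ) : ((((X:ℝ[X])^2 - 1))^n).natDegree = 2*n := by
  rw [natDegree_pow]
  have : ((X:ℝ[X])^2 - 1).natDegree = 2 := by compute_degree!
  rw [this, Nat.mul_comm]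

/-- for `j, k ≥ 1` with `j − k ∉ {−2, 0, 2}`,
`∫_{−1}^{1} Pⱼ Pₖ (t²−1)² dt = 0` where
`Pₙ(t) = (1/(t²−1))·dⁿ⁻¹/dtⁿ⁻¹[(t²−1)ⁿ]`. -/
theorem stmt12 (j k : ℕ) (hj : 1 ≤ j) (hk : 1 ≤ k)
    (h2 : (j : ℤ) - k ≠ -2) (h0 : (j : ℤ) - k ≠ 0) (h2' : (j : ℤ) - k ≠ 2)
    (p q : ℝ[X])
    (hp : (X ^ 2 - 1) * p = derivative^[j - 1] ((X ^ 2 - 1) ^ j))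
    (hq : (X ^ 2 - 1) * q = derivative^[k - 1] ((X ^ 2 - 1) ^ k)) :
    ∫ t in (-1 : ℝ)..1, p.eval t * q.eval t * (t ^ 2 - 1) ^ 2 = 0 := by
  set A := derivative^[j - 1] (((X:ℝ[X]) ^ 2 - 1) ^ j) with hAdef
  set B := derivative^[k - 1] (((X:ℝ[X]) ^ 2 - 1) ^ k) with hBdef
  have hi : ∀ t : ℝ, p.eval t * q.eval t * (t ^ 2 - 1) ^ 2 = A.eval t * B.eval t := by
    intro t
    have h1 : (t^2 - 1) * p.eval t = A.eval t := by
      rw [← hp]; simp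
    have h2 : (t^2 - 1) * q.eval t = B.eval t := by
      rw [← hq]; simp
    rw [← h1, ← h2]; ring
  simp only [hi]
  rcases Nat.even_or_odd (j + k) with hev | hodd
  · -- even: |j - k| ≥ 4, use integration by parts
    rcases lt_or_gt_of_ne (fun h : j = k => h0 (by simp [h])) with hlt | hgt
    · -- j < k, so k ≥ j + 3
      have hk3 : j + 3 ≤ k := by
        rcases hev with ⟨m, hm⟩
        omega
      have := key_zero k (((X:ℝ[X])^2 - 1)^j) (k-1) (j-1) le_rfl
        (by rw [natdeg_pow]; omega)
      simpa [hAdef, hBdef, mul_comm] using this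
    · -- j > k, so j ≥ k + 3
      have hj3 : k + 3 ≤ j := by
        rcases hev with ⟨m, hm⟩
        omega
      exact key_zero j (((X:ℝ[X])^2 - 1)^k) (j-1) (k-1) le_rfl
        (by rw [natdeg_pow]; omega)
  · -- odd: integrand is odd
    apply odd_int
    intro t
    have hAneg : A.eval (-t) = ((-1:ℝ)^(j-1)) * A.eval t := by
      have := congrArg (Polynomial.eval t) (comp_neg j (j-1))
      simpa [eval_comp] using this
    have hBneg : B.eval (-t) = ((-1:ℝ)^(k-1)) * B.eval t := by
      have := congrArg (Polynomial.eval t) (comp_neg k (k-1))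
      simpa [eval_comp] using this
    have hoddm : Odd ((j-1) + (k-1)) := by
      rcases hodd with ⟨m, hm⟩
      exact ⟨m - 1, by omega⟩
    have hprod : ((-1:ℝ)^(j-1)) * ((-1:ℝ)^(k-1)) = -1 := by
      rw [← pow_add]; exact Odd.neg_one_pow hoddm
    rw [hAneg, hBneg, show ((-1:ℝ)^(j-1)) * A.eval t * (((-1:ℝ)^(k-1)) * B.eval t)
      = (((-1:ℝ)^(j-1)) * ((-1:ℝ)^(k-1))) * (A.eval t * B.eval t) from by ring, hprod]
    ring
end
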